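/- In the regret game, if v > (1/p)·(1 + κ·(1−p)), then for every player i and every action profile a, the expected payoff from choosing risky strictly exceeds the expected payoff from choosing safe (i.e., risky is a strictly dominant action); consequently, the profile in which every player chooses risky is a pure strategy Nash equilibrium and it is the unique pure strategy Nash equilibrium. -/

import Mathlib

/-!
The risky payoff `p v - (1 - p) κ` does not depend on the others, and the hypothesis on `v` is
exactly that it exceeds `1`; the safe payoff is `1` minus a nonnegative expected regret, so at
most `1`. Hence risky strictly dominates safe, and with a strictly dominant action every player
must play it in any equilibrium, while all-risky leaves nobody a profitable deviation.
-/

namespace RegretGame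

/-- An action in the regret game: choose the risky lottery or the safe lottery. -/
inductive Act : Type
  | risky : Act
  | safe : Act
deriving DecidableEq, Repr

/-- `numRisky a i` is the number of players other than `i` choosing the risky lottery
at the action profile `a`. -/
def numRisky {N : ℕ} (a : Fin N → Act) (i : Fin N) : ℕ :=
  (Finset.univ.filter (fun j => j ≠ i ∧ a j = Act.risky)).card

/-- Player `i`'s expected payoff in the regret game at action profile `a`, given the
success probability `p`, coefficient of regret aversion `κ`, normalized good-state
payoff `v` of the risky lottery, and the information function `q` (the probability of
learning the risky outcome, as a function of how many of the others chose risky). -/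
noncomputable def payoff {N : ℕ} (p κ v : ℝ) (q : ℕ → ℝ)
    (a : Fin N → Act) (i : Fin N) : ℝ :=
  if a i = Act.risky then p * v - (1 - p) * κ
  else 1 - p * q (numRisky a i) * κ * (v - 1)

/-- A pure strategy Nash equilibrium of the regret game: no player can strictly
increase her expected payoff by unilaterally changing her own action. -/
def IsNash {N : ℕ} (p κ v : ℝ) (q : ℕ → ℝ) (a : Fin N → Act) : Prop :=
  ∀ (i : Fin N) (b : Act),
    payoff p κ v q (Function.update a i b) i ≤ payoff p κ v q a i

lemma numRisky_le {N : ℕ} (a : Fin N → Act) (i : Fin N) : numRisky a i ≤ N - 1 := by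
  calc numRisky a i ≤ (Finset.univ.erase i).card :=
        Finset.card_le_card fun j hj => by simp_all
    _ = N - 1 := by simp

section Payoffs

variable {N : ℕ} {p κ v : ℝ} {q : ℕ → ℝ} {a : Fin N → Act} {i : Fin N}

lemma payoff_of_risky (h : a i = Act.risky) : payoff p κ v q a i = p * v - (1 - p) * κ := by
  simp [payoff, h]

lemma payoff_of_safe (h : a i = Act.safe) :
    payoff p κ v q a i = 1 - p * q (numRisky a i) * κ * (v - 1) := by
  simp [payoff, h]

lemma payoff_le_one_of_safe (hp : 0 ≤ p) (hκ : 0 ≤ κ) (hv : 1 ≤ v)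
    (hq : ∀ m ≤ N - 1, 0 ≤ q m) (h : a i = Act.safe) : payoff p κ v q a i ≤ 1 := by
  have hregret : 0 ≤ p * q (numRisky a i) * κ * (v - 1) := by
    have := hq _ (numRisky_le a i)
    have : 0 ≤ v - 1 := by linarith
    positivity
  rw [payoff_of_safe h]
  linarith

end Payoffs

lemma one_lt_riskyPayoff {p κ v : ℝ} (hp : 0 < p) (hdom : v > (1 / p) * (1 + κ * (1 - p))) :
    1 < p * v - (1 - p) * κ := by
  rw [gt_iff_lt, one_div_mul_eq_div, div_lt_iff₀ hp] at hdom
  linarith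

def RiskyStrictlyDominant (N : ℕ) (p κ v : ℝ) (q : ℕ → ℝ) : Prop :=
  ∀ (a : Fin N → Act) (i : Fin N),
    payoff p κ v q (Function.update a i Act.safe) i <
      payoff p κ v q (Function.update a i Act.risky) i

section Dominance

variable {N : ℕ} {p κ v : ℝ} {q : ℕ → ℝ}

lemma RiskyStrictlyDominant.payoff_update_le (hdom : RiskyStrictlyDominant N p κ v q)
    (a : Fin N → Act) (i : Fin N) (b : Act) :
    payoff p κ v q (Function.update a i b) i ≤ payoff p κ v q (Function.update a i Act.risky) i := by
  cases b
  · exact le_rfl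
  · exact (hdom a i).le

lemma RiskyStrictlyDominant.isNash_const (hdom : RiskyStrictlyDominant N p κ v q) :
    IsNash p κ v q (fun _ : Fin N => Act.risky) := fun i b => by
  simpa using hdom.payoff_update_le (fun _ => Act.risky) i b

lemma RiskyStrictlyDominant.eq_const_of_isNash (hdom : RiskyStrictlyDominant N p κ v q)
    {a : Fin N → Act} (ha : IsNash p κ v q a) : a = fun _ : Fin N => Act.risky := by
  funext i
  cases hai : a i with
  | risky => rfl
  | safe =>
    have hdev := ha i Act.risky
    rw [← Function.update_eq_self i a, hai, Function.update_idem] at hdev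
    exact absurd (hdom a i) (not_lt.mpr hdev)

end Dominance

theorem regret_game_risky_dominant_general
    (N : ℕ) (p κ v : ℝ)
    (hp : 0 < p ∧ p < 1) (hκ : 0 < κ) (hv : 1 < v)
    (q : ℕ → ℝ)
    (hq01 : ∀ m ≤ N - 1, 0 ≤ q m ∧ q m ≤ 1)
    (hdom : v > (1 / p) * (1 + κ * (1 - p))) :
    (∀ (a : Fin N → Act) (i : Fin N),
        payoff p κ v q (Function.update a i Act.safe) i <
          payoff p κ v q (Function.update a i Act.risky) i) ∧
    IsNash p κ v q (fun _ : Fin N => Act.risky) ∧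
    (∀ a : Fin N → Act, IsNash p κ v q a → a = fun _ : Fin N => Act.risky) := by
  have hstrict : RiskyStrictlyDominant N p κ v q := fun a i =>
    calc payoff p κ v q (Function.update a i Act.safe) i
        ≤ 1 := payoff_le_one_of_safe hp.1.le hκ.le hv.le (fun m hm => (hq01 m hm).1) (by simp)
      _ < p * v - (1 - p) * κ := one_lt_riskyPayoff hp.1 hdom
      _ = payoff p κ v q (Function.update a i Act.risky) i := (payoff_of_risky (by simp)).symm
  exact ⟨hstrict, hstrict.isNash_const, fun _ => hstrict.eq_const_of_isNash⟩

/-- **Theorem 3, part 2.** If `v > (1/p)·(1 + κ·(1−p))`, then risky is a strictly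
dominant action for every player, the all-risky profile is a pure strategy Nash
equilibrium, and it is the unique pure strategy Nash equilibrium of the regret game. -/
theorem regret_game_risky_dominant
    (N : ℕ) (hN : 2 ≤ N) (p κ v : ℝ)
    (hp : 0 < p ∧ p < 1) (hκ : 0 < κ) (hv : 1 < v)
    (q : ℕ → ℝ)
    (hq01 : ∀ m ≤ N - 1, 0 ≤ q m ∧ q m ≤ 1)
    (hq0 : q 0 = 0) (hqN : q (N - 1) = 1)
    (hqmono : ∀ m₁ m₂, m₁ < m₂ → m₂ ≤ N - 1 → q m₁ < q m₂)
    (hdom : v > (1 / p) * (1 + κ * (1 - p))) :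
    (∀ (a : Fin N → Act) (i : Fin N),
        payoff p κ v q (Function.update a i Act.safe) i <
          payoff p κ v q (Function.update a i Act.risky) i) ∧
    IsNash p κ v q (fun _ : Fin N => Act.risky) ∧
    (∀ a : Fin N → Act, IsNash p κ v q a → a = fun _ : Fin N => Act.risky) :=
  regret_game_risky_dominant_general N p κ v hp hκ hv q hq01 hdom

end RegretGame
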